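/- arXiv:math/0407322 — 2 statements merged into one kernel-verified Lean document; each statement's English description precedes it below -/
import Mathlib

section
/- Assume condition (exp). Then B_n² ≍ n^{(r+2)/(r+1)}, i.e. there are constants C_1, C_2 > 0 and N such that C_1 n^{(r+2)/(r+1)} ≤ B_n² ≤ C_2 n^{(r+2)/(r+1)} for all n ≥ N. -/
open Finset Filter

/-- The number of multisets of total size `n` determined by the parameters `a j`
(the number of one-component multisets of size `j`), i.e.
`c_n = Σ_{η ∈ Ω_n} Π_{j=1}^n C(a_j + η_j - 1, η_j)` where
`Ω_n = {η : Σ_{j=1}^n j·η_j = n}` (indices shifted: `j ∈ Fin n` stands for `j+1`). -/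
def multisetCount (a : ℕ → ℕ) (n : ℕ) : ℕ :=
  ∑ η : Fin n → Fin (n + 1),
    if ∑ j : Fin n, (j.1 + 1) * (η j).1 = n then
      ∏ j : Fin n, Nat.choose (a (j.1 + 1) + (η j).1 - 1) (η j).1
    else 0

/-- `M_n(σ) = Σ_{j=1}^n j a_j e^{-jσ}/(1-e^{-jσ})`. -/
noncomputable def Mfun (a : ℕ → ℕ) (n : ℕ) (σ : ℝ) : ℝ :=
  ∑ j ∈ Finset.Icc 1 n, (j : ℝ) * (a j) * Real.exp (-(j * σ)) / (1 - Real.exp (-(j * σ)))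

/-- `B_n²(σ) = Σ_{j=1}^n j² a_j e^{-jσ}/(1-e^{-jσ})²`. -/
noncomputable def B2 (a : ℕ → ℕ) (n : ℕ) (σ : ℝ) : ℝ :=
  ∑ j ∈ Finset.Icc 1 n, (j : ℝ) ^ 2 * (a j) * Real.exp (-(j * σ)) / (1 - Real.exp (-(j * σ))) ^ 2

/-- Condition (exp): `a_j ≍ j^{r-1} y^j`, i.e. there are constants `D₁, D₂ > 0` with
`D₁ j^{r-1} y^j ≤ a_j ≤ D₂ j^{r-1} y^j` for all `j ≥ 1`. -/
def ExpansiveCond (a : ℕ → ℕ) (r y : ℝ) : Prop :=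
  ∃ D₁ D₂ : ℝ, 0 < D₁ ∧ 0 < D₂ ∧ ∀ j : ℕ, 1 ≤ j →
    D₁ * (j : ℝ) ^ (r - 1) * y ^ j ≤ (a j : ℝ) ∧ (a j : ℝ) ≤ D₂ * (j : ℝ) ^ (r - 1) * y ^ j

/-! Put `t = σ_n - log y`. Under (exp) the `j`-th terms of `M_n` and `B_n²` are, up to constants,
`j^{r+k-1} e^{-jt}` from below and `j^{r-1} e^{-jt} (j + 1/t)^k` from above (`k = 1, 2`), because
`1 ≤ 1/(1 - e^{-x}) ≤ 1 + 1/x` for `x > 0`. Sums `Σ_{j ≤ n} j^p e^{-jt}` are of order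
`t^{-(p+1)}` once `1/n ≤ t ≤ 1/2`, and `M_n(σ_n) = n` forces `t` into that range for large `n`.
Hence `n ≍ t^{-(r+1)}` and `B_n² ≍ t^{-(r+2)}`, and eliminating `t` gives the claim. -/

open Real

noncomputable def powExpSum (p t : ℝ) (n : ℕ) : ℝ :=
  ∑ j ∈ Icc 1 n, (j : ℝ) ^ p * exp (-(j * t))

lemma inv_one_sub_exp_neg_le {x : ℝ} (hx : 0 < x) : (1 - exp (-x))⁻¹ ≤ 1 + x⁻¹ := by
  have hq : exp (-x) < 1 := exp_lt_one_iff.2 (neg_lt_zero.2 hx)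
  have key : exp (-x) * (x + 1) ≤ 1 := by
    calc exp (-x) * (x + 1) ≤ exp (-x) * exp x := by gcongr; exact add_one_le_exp x
      _ = 1 := by rw [← exp_add, neg_add_cancel, exp_zero]
  have hexpand : (1 + x⁻¹) * (1 - exp (-x)) = 1 + x⁻¹ * (1 - exp (-x) * (x + 1)) := by
    field_simp
    ring
  rw [inv_le_iff_one_le_mul₀ (sub_pos.2 hq), hexpand]
  nlinarith [mul_nonneg (inv_pos.2 hx).le (sub_nonneg.2 key)]

lemma sum_exp_neg_mul_le_inv {t : ℝ} (ht : 0 < t) (n : ℕ) :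
    ∑ j ∈ Icc 1 n, exp (-(j * t)) ≤ t⁻¹ := by
  have hx : exp (-t) < 1 := exp_lt_one_iff.2 (neg_lt_zero.2 ht)
  calc ∑ j ∈ Icc 1 n, exp (-(j * t)) = ∑ j ∈ Ico 1 (n + 1), exp (-t) ^ j := by
        refine sum_congr rfl fun j _ => ?_
        rw [← exp_nat_mul, mul_neg, mul_comm]
    _ ≤ exp (-t) ^ 1 / (1 - exp (-t)) := geom_sum_Ico_le_of_lt_one (exp_pos _).le hx
    _ = (1 - exp (-t))⁻¹ - 1 := by
        field_simp [(sub_pos.2 hx).ne']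
        ring
    _ ≤ t⁻¹ := by linarith [inv_one_sub_exp_neg_le ht]

lemma rpow_mul_exp_neg_mul_le {p c x : ℝ} (hp : 0 < p) (hc : 0 < c) (hx : 0 ≤ x) :
    x ^ p * exp (-(c * x)) ≤ (p / c) ^ p := by
  have hz : 0 ≤ c * x / p := by positivity
  have hpow : (c * x / p) ^ p ≤ exp (c * x) := by
    calc (c * x / p) ^ p ≤ exp (c * x / p) ^ p :=
          rpow_le_rpow hz (by linarith [add_one_le_exp (c * x / p)]) hp.le
      _ = exp (c * x) := by rw [← exp_mul, div_mul_cancel₀ _ hp.ne']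
  calc x ^ p * exp (-(c * x)) = (p / c) ^ p * (c * x / p) ^ p * exp (-(c * x)) := by
        rw [← mul_rpow (by positivity) hz]
        congr 2
        field_simp
    _ ≤ (p / c) ^ p * exp (c * x) * exp (-(c * x)) := by gcongr
    _ = (p / c) ^ p := by rw [mul_assoc, ← exp_add, add_neg_cancel, exp_zero, mul_one]

lemma mul_rpow_sub_one_le_rpow_sub_rpow {q x : ℝ} (hq₀ : 0 ≤ q) (hq₁ : q ≤ 1) (hx : 1 ≤ x) :
    q * x ^ (q - 1) ≤ x ^ q - (x - 1) ^ q := by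
  have hx₀ : 0 < x := by linarith
  have hs : -1 ≤ -x⁻¹ := neg_le_neg (inv_le_one_of_one_le₀ hx)
  have hbern : (1 + -x⁻¹) ^ q ≤ 1 + q * -x⁻¹ := rpow_one_add_le_one_add_mul_self hs hq₀ hq₁
  have hsplit : (x - 1) ^ q = x ^ q * (1 + -x⁻¹) ^ q := by
    rw [← mul_rpow hx₀.le (by linarith)]
    congr 1
    field_simp
    ring
  have hexpand : x ^ q * (1 + q * -x⁻¹) = x ^ q - q * (x ^ q / x) := by ring
  rw [hsplit, rpow_sub_one hx₀.ne']
  linarith [mul_le_mul_of_nonneg_left hbern (rpow_nonneg hx₀.le q)]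

lemma sum_rpow_le {p : ℝ} (hp₁ : -1 < p) (hp₀ : p ≤ 0) (N : ℕ) :
    ∑ j ∈ Icc 1 N, (j : ℝ) ^ p ≤ (N : ℝ) ^ (p + 1) / (p + 1) := by
  have hp : 0 < p + 1 := by linarith
  induction N with
  | zero => simp [zero_rpow hp.ne']
  | succ N ih =>
    have hstep := mul_rpow_sub_one_le_rpow_sub_rpow hp.le (by linarith)
      (by simp : (1 : ℝ) ≤ (N + 1 : ℕ))
    rw [add_sub_cancel_right, Nat.cast_add_one, add_sub_cancel_right] at hstep
    rw [sum_Icc_succ_top (by omega), le_div_iff₀ hp]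
    rw [le_div_iff₀ hp] at ih
    push_cast
    linarith

lemma powExpSum_le_of_nonpos {p t : ℝ} (hp₁ : -1 < p) (hp₀ : p ≤ 0) (ht : 0 < t) (n : ℕ) :
    powExpSum p t n ≤ ((p + 1)⁻¹ + 1) * t ^ (-(p + 1)) := by
  set N := ⌊t⁻¹⌋₊
  have hterm : ∀ j ∈ Icc 1 n, (j : ℝ) ^ p * exp (-(j * t)) ≤
      (if j ≤ N then (j : ℝ) ^ p else 0) + t ^ (-p) * exp (-(j * t)) := by
    intro j hj
    have hj₀ : (0 : ℝ) < j := by exact_mod_cast (mem_Icc.1 hj).1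
    split_ifs with hjN
    · have : exp (-(j * t)) ≤ 1 := exp_le_one_iff.2 (by nlinarith)
      calc (j : ℝ) ^ p * exp (-(j * t)) ≤ (j : ℝ) ^ p := mul_le_of_le_one_right (by positivity) this
        _ ≤ _ := le_add_of_nonneg_right (by positivity)
    · have hlt : t⁻¹ < j := (Nat.floor_lt (inv_pos.2 ht).le).1 (not_le.1 hjN)
      rw [zero_add, rpow_neg ht.le, ← inv_rpow ht.le]
      exact mul_le_mul_of_nonneg_right (rpow_le_rpow_of_nonpos (inv_pos.2 ht) hlt.le hp₀)
        (exp_pos _).le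
  calc powExpSum p t n
      ≤ ∑ j ∈ Icc 1 n, ((if j ≤ N then (j : ℝ) ^ p else 0) + t ^ (-p) * exp (-(j * t))) :=
        sum_le_sum hterm
    _ = ∑ j ∈ Icc 1 n with j ≤ N, (j : ℝ) ^ p + t ^ (-p) * ∑ j ∈ Icc 1 n, exp (-(j * t)) := by
        rw [sum_add_distrib, sum_filter, mul_sum]
    _ ≤ ∑ j ∈ Icc 1 N, (j : ℝ) ^ p + t ^ (-p) * t⁻¹ := by
        gcongr
        · intro j hj
          simp only [mem_filter, mem_Icc] at hj ⊢
          omega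
        · exact sum_exp_neg_mul_le_inv ht n
    _ ≤ (N : ℝ) ^ (p + 1) / (p + 1) + t ^ (-p) * t⁻¹ := by
        gcongr
        exact sum_rpow_le hp₁ hp₀ N
    _ ≤ t⁻¹ ^ (p + 1) / (p + 1) + t ^ (-p) * t⁻¹ := by
        have hN : (N : ℝ) ≤ t⁻¹ := Nat.floor_le (inv_pos.2 ht).le
        gcongr <;> linarith
    _ = ((p + 1)⁻¹ + 1) * t ^ (-(p + 1)) := by
        rw [inv_rpow ht.le, ← rpow_neg ht.le, neg_add, rpow_add ht, rpow_neg_one]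
        ring

lemma powExpSum_le_of_pos {p t : ℝ} (hp : 0 < p) (ht : 0 < t) (n : ℕ) :
    powExpSum p t n ≤ 2 * (2 * p) ^ p * t ^ (-(p + 1)) := by
  have ht2 : 0 < t / 2 := by positivity
  calc powExpSum p t n
      = ∑ j ∈ Icc 1 n, (j : ℝ) ^ p * exp (-(t / 2 * j)) * exp (-(j * (t / 2))) := by
        refine sum_congr rfl fun j _ => ?_
        rw [mul_assoc, ← exp_add]
        ring_nf
    _ ≤ ∑ j ∈ Icc 1 n, (2 * p / t) ^ p * exp (-(j * (t / 2))) := by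
        gcongr with j
        have := rpow_mul_exp_neg_mul_le hp ht2 (Nat.cast_nonneg j)
        rwa [show p / (t / 2) = 2 * p / t by ring] at this
    _ ≤ (2 * p / t) ^ p * (t / 2)⁻¹ := by
        rw [← mul_sum]
        gcongr
        exact sum_exp_neg_mul_le_inv ht2 n
    _ = 2 * (2 * p) ^ p * t ^ (-(p + 1)) := by
        rw [div_rpow (by positivity) ht.le, rpow_neg ht.le, rpow_add_one ht.ne']
        field_simp

lemma exists_powExpSum_le {p : ℝ} (hp : -1 < p) :
    ∃ C > 0, ∀ t > 0, ∀ n, powExpSum p t n ≤ C * t ^ (-(p + 1)) := by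
  rcases le_or_gt p 0 with hp₀ | hp₀
  · have : 0 < p + 1 := by linarith
    exact ⟨(p + 1)⁻¹ + 1, by positivity, fun t ht n => powExpSum_le_of_nonpos hp hp₀ ht n⟩
  · exact ⟨2 * (2 * p) ^ p, by positivity, fun t ht n => powExpSum_le_of_pos hp₀ ht n⟩

lemma le_powExpSum {p t : ℝ} {m n : ℕ} (hp : 0 ≤ p) (hmn : m ≤ n) (hmt : m * t ≤ 1) :
    exp (-1) * ((m : ℝ) / 2) ^ (p + 1) ≤ powExpSum p t n := by
  set s := Icc (m / 2 + 1) m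
  have hterm : ∀ j ∈ s, ((m : ℝ) / 2) ^ p * exp (-1) ≤ (j : ℝ) ^ p * exp (-(j * t)) := by
    intro j hj
    obtain ⟨hj₁, hj₂⟩ := mem_Icc.1 hj
    have hjm : (m : ℝ) / 2 ≤ j := by
      rw [div_le_iff₀ two_pos]; exact_mod_cast (by omega : m ≤ j * 2)
    have hjt : (j : ℝ) * t ≤ 1 := by
      have : (j : ℝ) ≤ m := by exact_mod_cast hj₂
      rcases le_or_gt 0 t with h | h <;> nlinarith
    gcongr
  have hcard : (m : ℝ) / 2 ≤ #s := by
    rw [div_le_iff₀ two_pos, Nat.card_Icc]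
    exact_mod_cast (by omega : m ≤ (m + 1 - (m / 2 + 1)) * 2)
  calc exp (-1) * ((m : ℝ) / 2) ^ (p + 1) = (m : ℝ) / 2 * (((m : ℝ) / 2) ^ p * exp (-1)) := by
        rw [rpow_add_one' (by positivity) (by linarith)]
        ring
    _ ≤ #s * (((m : ℝ) / 2) ^ p * exp (-1)) := by gcongr
    _ ≤ ∑ j ∈ s, (j : ℝ) ^ p * exp (-(j * t)) := by
        simpa using card_nsmul_le_sum s _ _ hterm
    _ ≤ powExpSum p t n :=
        sum_le_sum_of_subset_of_nonneg (fun j hj => by simp [s] at hj ⊢; omega)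
          fun j _ _ => by positivity

lemma le_powExpSum_of_one_le_mul {p t : ℝ} {n : ℕ} (hp : 0 ≤ p) (hnt : 1 ≤ n * t)
    (ht : t ≤ 1 / 2) : exp (-1) * 4 ^ (-(p + 1)) * t ^ (-(p + 1)) ≤ powExpSum p t n := by
  have ht₀ : 0 < t := pos_of_mul_pos_right (one_pos.trans_le hnt) n.cast_nonneg
  set m := ⌊t⁻¹⌋₊
  have hm : t⁻¹ - 1 < m := Nat.sub_one_lt_floor _
  have hinv : 2 ≤ t⁻¹ := by rw [le_inv_comm₀ two_pos ht₀]; linarith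
  calc exp (-1) * 4 ^ (-(p + 1)) * t ^ (-(p + 1)) = exp (-1) * (t⁻¹ / 4) ^ (p + 1) := by
        rw [div_rpow (by positivity) (by norm_num), inv_rpow ht₀.le, ← rpow_neg ht₀.le,
          rpow_neg (by norm_num : (0 : ℝ) ≤ 4)]
        ring
    _ ≤ exp (-1) * ((m : ℝ) / 2) ^ (p + 1) := by gcongr exp (-1) * ?_ ^ _; linarith
    _ ≤ powExpSum p t n := by
        refine le_powExpSum hp (Nat.floor_le_of_le ?_) ?_
        · rw [inv_le_iff_one_le_mul₀ ht₀]; linarith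
        · rw [← le_div_iff₀ ht₀, one_div]; exact Nat.floor_le (by positivity)

noncomputable def momentSum (a : ℕ → ℕ) (k n : ℕ) (σ : ℝ) : ℝ :=
  ∑ j ∈ Icc 1 n, (j : ℝ) ^ k * a j * exp (-(j * σ)) / (1 - exp (-(j * σ))) ^ k

lemma Mfun_eq_momentSum (a : ℕ → ℕ) (n : ℕ) (σ : ℝ) : Mfun a n σ = momentSum a 1 n σ := by
  simp only [Mfun, momentSum, pow_one]

lemma B2_eq_momentSum (a : ℕ → ℕ) (n : ℕ) (σ : ℝ) : B2 a n σ = momentSum a 2 n σ := rfl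

lemma pow_mul_exp_neg_mul {y : ℝ} (hy : 0 < y) (j : ℕ) (σ : ℝ) :
    y ^ j * exp (-(j * σ)) = exp (-(j * (σ - log y))) := by
  rw [← exp_log hy, ← exp_nat_mul, ← exp_add, log_exp]
  ring_nf

lemma div_one_sub_exp_neg_mul_le {x σ : ℝ} (hx : 0 < x) (hσ : 0 < σ) :
    x / (1 - exp (-(x * σ))) ≤ x + σ⁻¹ := by
  calc x / (1 - exp (-(x * σ))) ≤ x * (1 + (x * σ)⁻¹) := by
        rw [div_eq_mul_inv]
        gcongr
        exact inv_one_sub_exp_neg_le (mul_pos hx hσ)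
    _ = x + σ⁻¹ := by field_simp

section Moments

variable {a : ℕ → ℕ} {r y D : ℝ}

lemma mul_powExpSum_le_momentSum {σ : ℝ} (k n : ℕ) (hy : 0 < y) (hσ : 0 < σ)
    (hD : ∀ j : ℕ, 1 ≤ j → D * (j : ℝ) ^ (r - 1) * y ^ j ≤ a j) :
    D * powExpSum (r - 1 + k) (σ - log y) n ≤ momentSum a k n σ := by
  rw [powExpSum, mul_sum]
  refine sum_le_sum fun j hj => ?_
  have hj₁ := (mem_Icc.1 hj).1
  have hj₀ : (0 : ℝ) < j := by exact_mod_cast hj₁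
  have hq : exp (-(j * σ)) < 1 := exp_lt_one_iff.2 (neg_lt_zero.2 (mul_pos hj₀ hσ))
  calc D * ((j : ℝ) ^ (r - 1 + k) * exp (-(j * (σ - log y))))
      = (j : ℝ) ^ k * (D * (j : ℝ) ^ (r - 1) * y ^ j) * exp (-(j * σ)) := by
        rw [rpow_add_natCast hj₀.ne', ← pow_mul_exp_neg_mul hy]
        ring
    _ ≤ (j : ℝ) ^ k * a j * exp (-(j * σ)) := by gcongr; exact hD j hj₁
    _ ≤ (j : ℝ) ^ k * a j * exp (-(j * σ)) / (1 - exp (-(j * σ))) ^ k :=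
        le_div_self (by positivity) (pow_pos (sub_pos.2 hq) k)
          (pow_le_one₀ (sub_nonneg.2 hq.le) (sub_le_self _ (exp_pos _).le))

lemma momentSum_le {σ u : ℝ} (k n : ℕ) (hy : 1 ≤ y) (hD₀ : 0 ≤ D)
    (hD : ∀ j : ℕ, 1 ≤ j → (a j : ℝ) ≤ D * (j : ℝ) ^ (r - 1) * y ^ j)
    (hu : 0 < u) (hut : u ≤ σ - log y) :
    momentSum a k n σ ≤
      2 ^ (k - 1) * D * (powExpSum (r - 1 + k) u n + u⁻¹ ^ k * powExpSum (r - 1) u n) := by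
  have huσ : u ≤ σ := hut.trans (sub_le_self _ (log_nonneg hy))
  rw [powExpSum, powExpSum, mul_sum, ← sum_add_distrib, mul_sum]
  refine sum_le_sum fun j hj => ?_
  have hj₁ := (mem_Icc.1 hj).1
  have hj₀ : (0 : ℝ) < j := by exact_mod_cast hj₁
  have hweight : (a j : ℝ) * exp (-(j * σ)) ≤ D * (j : ℝ) ^ (r - 1) * exp (-(j * u)) := by
    calc (a j : ℝ) * exp (-(j * σ)) ≤ D * (j : ℝ) ^ (r - 1) * (y ^ j * exp (-(j * σ))) := by
          rw [← mul_assoc]; gcongr; exact hD j hj₁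
      _ ≤ D * (j : ℝ) ^ (r - 1) * exp (-(j * u)) := by
          rw [pow_mul_exp_neg_mul (by linarith)]; gcongr
  have hq : exp (-(j * σ)) < 1 := exp_lt_one_iff.2 (neg_lt_zero.2 (mul_pos hj₀ (hu.trans_le huσ)))
  have hratio₀ : 0 ≤ (j : ℝ) / (1 - exp (-(j * σ))) := div_nonneg hj₀.le (sub_nonneg.2 hq.le)
  have hratio : (j : ℝ) / (1 - exp (-(j * σ))) ≤ j + u⁻¹ :=
    (div_one_sub_exp_neg_mul_le hj₀ (hu.trans_le huσ)).trans (by gcongr)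
  calc (j : ℝ) ^ k * a j * exp (-(j * σ)) / (1 - exp (-(j * σ))) ^ k
      = (a j : ℝ) * exp (-(j * σ)) * ((j : ℝ) / (1 - exp (-(j * σ)))) ^ k := by ring
    _ ≤ D * (j : ℝ) ^ (r - 1) * exp (-(j * u)) * ((j : ℝ) + u⁻¹) ^ k := by
        gcongr
    _ ≤ D * (j : ℝ) ^ (r - 1) * exp (-(j * u)) * (2 ^ (k - 1) * ((j : ℝ) ^ k + u⁻¹ ^ k)) := by
        gcongr
        exact add_pow_le hj₀.le (inv_pos.2 hu).le k
    _ = 2 ^ (k - 1) * D * ((j : ℝ) ^ (r - 1 + k) * exp (-(j * u)) +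
          u⁻¹ ^ k * ((j : ℝ) ^ (r - 1) * exp (-(j * u)))) := by
        rw [rpow_add_natCast hj₀.ne']
        ring

lemma exists_momentSum_le (k : ℕ) (hr : 0 < r) (hy : 1 ≤ y) (hD₀ : 0 < D)
    (hD : ∀ j : ℕ, 1 ≤ j → (a j : ℝ) ≤ D * (j : ℝ) ^ (r - 1) * y ^ j) :
    ∃ C > 0, ∀ n σ u, 0 < u → u ≤ σ - log y → momentSum a k n σ ≤ C * u ^ (-(r + k)) := by
  obtain ⟨C₁, hC₁, h₁⟩ := exists_powExpSum_le (p := r - 1 + k) (by linarith [k.cast_nonneg (α := ℝ)])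
  obtain ⟨C₀, hC₀, h₀⟩ := exists_powExpSum_le (p := r - 1) (by linarith)
  refine ⟨2 ^ (k - 1) * D * (C₁ + C₀), by positivity, fun n σ u hu hut => ?_⟩
  have hpow : u⁻¹ ^ k * u ^ (-(r - 1 + 1)) = u ^ (-(r + k)) := by
    rw [← rpow_natCast, inv_rpow hu.le, ← rpow_neg hu.le, ← rpow_add hu]
    ring_nf
  calc momentSum a k n σ
      ≤ 2 ^ (k - 1) * D * (powExpSum (r - 1 + k) u n + u⁻¹ ^ k * powExpSum (r - 1) u n) :=
        momentSum_le k n hy hD₀.le hD hu hut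
    _ ≤ 2 ^ (k - 1) * D * (C₁ * u ^ (-(r - 1 + k + 1)) + u⁻¹ ^ k * (C₀ * u ^ (-(r - 1 + 1)))) := by
        gcongr
        exacts [h₁ u hu n, h₀ u hu n]
    _ = 2 ^ (k - 1) * D * (C₁ + C₀) * u ^ (-(r + k)) := by
        rw [show r - 1 + k + 1 = r + k by ring, mul_left_comm, hpow]
        ring

lemma le_momentSum {σ : ℝ} {k n : ℕ} (hk : 1 ≤ k) (hr : 0 < r) (hy : 1 ≤ y) (hD₀ : 0 ≤ D)
    (hD : ∀ j : ℕ, 1 ≤ j → D * (j : ℝ) ^ (r - 1) * y ^ j ≤ a j) (hσ : 0 < σ)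
    (hnt : 1 ≤ n * (σ - log y)) (ht : σ - log y ≤ 1 / 2) :
    D * exp (-1) * 4 ^ (-(r + k)) * (σ - log y) ^ (-(r + k)) ≤ momentSum a k n σ := by
  have hk' : (1 : ℝ) ≤ k := by exact_mod_cast hk
  calc D * exp (-1) * 4 ^ (-(r + k)) * (σ - log y) ^ (-(r + k))
      = D * (exp (-1) * 4 ^ (-(r - 1 + k + 1)) * (σ - log y) ^ (-(r - 1 + k + 1))) := by
        rw [show r - 1 + k + 1 = r + k by ring]
        ring
    _ ≤ D * powExpSum (r - 1 + k) (σ - log y) n := by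
        gcongr
        exact le_powExpSum_of_one_le_mul (by linarith) hnt ht
    _ ≤ momentSum a k n σ := mul_powExpSum_le_momentSum k n (by linarith) hσ hD

end Moments

lemma eventually_lt_mul_rpow {c q : ℝ} (hc : 0 < c) (hq : 1 < q) :
    ∀ᶠ n : ℕ in atTop, (n : ℝ) < c * (n : ℝ) ^ q := by
  have h : Tendsto (fun n : ℕ => (n : ℝ) ^ (q - 1)) atTop atTop :=
    (tendsto_rpow_atTop (by linarith)).comp tendsto_natCast_atTop_atTop
  filter_upwards [h.eventually_gt_atTop c⁻¹, eventually_gt_atTop 0] with n hn hn₀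
  have hn₀' : (0 : ℝ) < n := by exact_mod_cast hn₀
  calc (n : ℝ) = c * c⁻¹ * n := by field_simp
    _ < c * (n : ℝ) ^ (q - 1) * n := by gcongr
    _ = c * (n : ℝ) ^ q := by rw [mul_assoc, ← rpow_add_one hn₀'.ne', sub_add_cancel]

section Saddle

variable {a : ℕ → ℕ} {r y D : ℝ} {σ : ℕ → ℝ}

lemma eventually_one_lt_mul_sub_log (hr : 0 < r) (hy : 0 < y) (hD₀ : 0 < D)
    (hD : ∀ j : ℕ, 1 ≤ j → D * (j : ℝ) ^ (r - 1) * y ^ j ≤ a j)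
    (hσ : ∀ n : ℕ, 1 ≤ n → 0 < σ n ∧ Mfun a n (σ n) = n) :
    ∀ᶠ n : ℕ in atTop, 1 < n * (σ n - log y) := by
  filter_upwards [eventually_lt_mul_rpow (c := D * exp (-1) / 2 ^ (r + 1)) (by positivity)
    (by linarith : 1 < r + 1), eventually_ge_atTop 1] with n hn hn₁
  by_contra! hnt
  obtain ⟨hσ₀, hM⟩ := hσ n hn₁
  have hsum := le_powExpSum (p := r) hr.le le_rfl hnt
  have hmoment := mul_powExpSum_le_momentSum 1 n hy hσ₀ hD
  rw [Nat.cast_one, sub_add_cancel, ← Mfun_eq_momentSum, hM] at hmoment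
  refine lt_irrefl (n : ℝ) ?_
  calc (n : ℝ) < D * exp (-1) / 2 ^ (r + 1) * (n : ℝ) ^ (r + 1) := hn
    _ = D * (exp (-1) * ((n : ℝ) / 2) ^ (r + 1)) := by
        rw [div_rpow (by positivity) (by norm_num)]
        ring
    _ ≤ D * powExpSum r (σ n - log y) n := by gcongr
    _ ≤ n := hmoment

lemma eventually_sub_log_le_half (hr : 0 < r) (hy : 1 ≤ y) (hD₀ : 0 < D)
    (hD : ∀ j : ℕ, 1 ≤ j → (a j : ℝ) ≤ D * (j : ℝ) ^ (r - 1) * y ^ j)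
    (hM : ∀ n : ℕ, 1 ≤ n → Mfun a n (σ n) = n) :
    ∀ᶠ n : ℕ in atTop, σ n - log y ≤ 1 / 2 := by
  obtain ⟨C, -, hC⟩ := exists_momentSum_le 1 hr hy hD₀ hD
  filter_upwards [tendsto_natCast_atTop_atTop.eventually_gt_atTop (C * (1 / 2) ^ (-(r + 1))),
    eventually_ge_atTop 1] with n hn hn₁
  by_contra! ht
  have hbound := hC n (σ n) (1 / 2) (by norm_num) ht.le
  rw [← Mfun_eq_momentSum, hM n hn₁, Nat.cast_one] at hbound
  linarith

end Saddle

lemma div_rpow_mul_rpow_le {m s t C d a b : ℝ} (hm : 0 ≤ m) (ht : 0 < t) (hC : 0 < C)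
    (hd : 0 ≤ d) (ha : 0 < a) (hb : 0 ≤ b) (hmt : m ≤ C * t ^ (-a)) (hst : d * t ^ (-b) ≤ s) :
    d / C ^ (b / a) * m ^ (b / a) ≤ s :=
  calc d / C ^ (b / a) * m ^ (b / a) ≤ d / C ^ (b / a) * (C * t ^ (-a)) ^ (b / a) := by gcongr
    _ = d * t ^ (-b) := by
        rw [mul_rpow hC.le (by positivity), ← rpow_mul ht.le, neg_mul, mul_div_cancel₀ _ ha.ne']
        field_simp
    _ ≤ s := hst

lemma le_div_rpow_mul_rpow {m s t c D a b : ℝ} (ht : 0 < t) (hc : 0 < c) (hD : 0 ≤ D)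
    (ha : 0 < a) (hb : 0 ≤ b) (hmt : c * t ^ (-a) ≤ m) (hst : s ≤ D * t ^ (-b)) :
    s ≤ D / c ^ (b / a) * m ^ (b / a) :=
  calc s ≤ D * t ^ (-b) := hst
    _ = D / c ^ (b / a) * (c * t ^ (-a)) ^ (b / a) := by
        rw [mul_rpow hc.le (by positivity), ← rpow_mul ht.le, neg_mul, mul_div_cancel₀ _ ha.ne']
        field_simp
    _ ≤ D / c ^ (b / a) * m ^ (b / a) := by gcongr

/-- under condition (exp), `B_n² ≍ n^{(r+2)/(r+1)}`. -/
theorem B2_asymptotics (a : ℕ → ℕ) (r y : ℝ) (hr : 0 < r) (hy : 1 ≤ y)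
    (hexp : ExpansiveCond a r y)
    (σ : ℕ → ℝ) (hσ : ∀ n : ℕ, 1 ≤ n → 0 < σ n ∧ Mfun a n (σ n) = n) :
    ∃ C₁ C₂ : ℝ, 0 < C₁ ∧ 0 < C₂ ∧ ∃ N : ℕ, ∀ n ≥ N,
      C₁ * (n : ℝ) ^ ((r + 2) / (r + 1)) ≤ B2 a n (σ n) ∧
      B2 a n (σ n) ≤ C₂ * (n : ℝ) ^ ((r + 2) / (r + 1)) := by
  obtain ⟨D₁, D₂, hD₁, hD₂, hD⟩ := hexp
  have hlow : ∀ j : ℕ, 1 ≤ j → D₁ * (j : ℝ) ^ (r - 1) * y ^ j ≤ a j := fun j hj => (hD j hj).1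
  have hup : ∀ j : ℕ, 1 ≤ j → (a j : ℝ) ≤ D₂ * (j : ℝ) ^ (r - 1) * y ^ j := fun j hj => (hD j hj).2
  obtain ⟨A, hA, hM_le⟩ := exists_momentSum_le 1 hr hy hD₂ hup
  obtain ⟨B, hB, hB_le⟩ := exists_momentSum_le 2 hr hy hD₂ hup
  set e := (r + 2) / (r + 1)
  obtain ⟨N, hN⟩ := eventually_atTop.1 <|
    (eventually_one_lt_mul_sub_log hr (by linarith) hD₁ hlow hσ).and <|
      (eventually_sub_log_le_half hr hy hD₂ hup fun n hn => (hσ n hn).2).and (eventually_ge_atTop 1)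
  refine ⟨D₁ * exp (-1) * 4 ^ (-(r + 2)) / A ^ e, B / (D₁ * exp (-1) * 4 ^ (-(r + 1))) ^ e,
    by positivity, by positivity, N, fun n hn => ?_⟩
  obtain ⟨hnt, ht, hn₁⟩ := hN n hn
  obtain ⟨hσ₀, hM⟩ := hσ n hn₁
  set t := σ n - log y
  have ht₀ : 0 < t := pos_of_mul_pos_right (one_pos.trans hnt) n.cast_nonneg
  rw [Mfun_eq_momentSum] at hM
  have hM_upper : (n : ℝ) ≤ A * t ^ (-(r + 1)) := by
    simpa [hM] using hM_le n (σ n) t ht₀ le_rfl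
  have hM_lower : D₁ * exp (-1) * 4 ^ (-(r + 1)) * t ^ (-(r + 1)) ≤ n := by
    simpa [hM] using le_momentSum le_rfl hr hy hD₁.le hlow hσ₀ hnt.le ht
  have hB_upper : B2 a n (σ n) ≤ B * t ^ (-(r + 2)) := by
    simpa [B2_eq_momentSum] using hB_le n (σ n) t ht₀ le_rfl
  have hB_lower : D₁ * exp (-1) * 4 ^ (-(r + 2)) * t ^ (-(r + 2)) ≤ B2 a n (σ n) := by
    simpa [B2_eq_momentSum] using le_momentSum one_le_two hr hy hD₁.le hlow hσ₀ hnt.le ht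
  exact ⟨div_rpow_mul_rpow_le n.cast_nonneg ht₀ hA (by positivity) (by positivity)
      (by positivity) hM_upper hB_lower,
    le_div_rpow_mul_rpow ht₀ (by positivity) hB.le (by positivity) (by positivity)
      hM_lower hB_upper⟩
end

section
/- Assume condition (exp). Then for every fixed integer l ≥ 3, ρ_l(n) ≍ n^{(r+l)/(r+1)}, i.e. there are constants C_1, C_2 > 0 and N (possibly depending on l) such that C_1 n^{(r+l)/(r+1)} ≤ ρ_l(n) ≤ C_2 n^{(r+l)/(r+1)} for all n ≥ N. -/
/-!
Write `σ = log y + δ`. Since `y ^ j e^{-jkσ} ≤ e^{-jkδ}`, with equality for `k = 1`, condition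
(exp) puts `ρ_l(n)` at `σ = log y + δ` between multiples of `Σ_{j ≤ n} j^{r+l-1} e^{-jδ}` and of
`Σ_{j ≤ n} j^{r+l-1} Σ_k k^{l-1} e^{-jkδ}`. Both are of order `δ^{-(r+l)}`: the first once
`1/δ ≤ n`, by comparison with `∫ x^{r+l-1}` over `[0, 1/δ]`; the second because the inner sum over
`j` at scale `kδ` is `O((kδ)^{-(r+l)})` and `Σ_k k^{l-1-(r+l)}` converges. As `M_n = ρ_1(n)` is
decreasing in `σ`, the case `l = 1` turns `M_n(σ_n) = n` into `δ_n ≍ n^{-1/(r+1)}`, whence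
`ρ_l(n) ≍ δ_n^{-(r+l)} = n^{(r+l)/(r+1)}`.
-/

open Finset Filter

/-- `ρ_l(n, σ) = Σ_{j=1}^n j^l a_j Σ_{k≥1} k^{l-1} e^{-jkσ}`. -/
noncomputable def rho (a : ℕ → ℕ) (l n : ℕ) (σ : ℝ) : ℝ :=
  ∑ j ∈ Finset.Icc 1 n, (j : ℝ) ^ l * (a j) *
    ∑' k : ℕ, ((k : ℝ) + 1) ^ (l - 1) * Real.exp (-((j : ℝ) * ((k : ℝ) + 1) * σ))

open Real

lemma rpow_le_mul_exp {c u : ℝ} (hc : 0 ≤ c) (hu : 0 ≤ u) : u ^ c ≤ (c + 1) ^ c * exp u := by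
  have hc1 : 0 < c + 1 := by linarith
  have hexp : (u / (c + 1)) ^ c ≤ exp u := calc
    (u / (c + 1)) ^ c ≤ exp (u / (c + 1)) ^ c := by
      gcongr; linarith [add_one_le_exp (u / (c + 1))]
    _ = exp (u * (c / (c + 1))) := by rw [← exp_mul]; ring_nf
    _ ≤ exp u := by
      gcongr
      exact mul_le_of_le_one_right hu ((div_le_one hc1).2 (by linarith))
  calc u ^ c = (c + 1) ^ c * (u / (c + 1)) ^ c := by
        rw [← mul_rpow hc1.le (by positivity), mul_div_cancel₀ _ hc1.ne']
    _ ≤ (c + 1) ^ c * exp u := by gcongr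

lemma sum_exp_neg_mul_le {t : ℝ} (ht : 0 < t) (n : ℕ) :
    ∑ j ∈ Icc 1 n, exp (-(j * t)) ≤ 1 / t := by
  have hq : exp (-t) < 1 := exp_lt_one_iff.2 (by linarith)
  calc ∑ j ∈ Icc 1 n, exp (-(j * t)) = ∑ j ∈ Ico 1 (n + 1), exp (-t) ^ j :=
        sum_congr rfl fun j _ => by rw [← exp_nat_mul]; ring_nf
    _ ≤ exp (-t) ^ 1 / (1 - exp (-t)) := geom_sum_Ico_le_of_lt_one (exp_pos _).le hq
    _ ≤ 1 / t := by
        rw [pow_one, div_le_div_iff₀ (by linarith) ht, one_mul]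
        have h := mul_le_mul_of_nonneg_left (add_one_le_exp t) (exp_pos (-t)).le
        rw [← exp_add, neg_add_cancel, exp_zero] at h
        linarith

lemma sum_rpow_mul_exp_neg_le {s t : ℝ} (hs : 1 ≤ s) (ht : 0 < t) (n : ℕ) :
    ∑ j ∈ Icc 1 n, (j : ℝ) ^ (s - 1) * exp (-(j * t)) ≤ s ^ (s - 1) * 2 ^ s * t ^ (-s) := by
  have hterm : ∀ j : ℕ, (j : ℝ) ^ (s - 1) * exp (-(j * t)) ≤
      s ^ (s - 1) * (2 / t) ^ (s - 1) * exp (-(j * (t / 2))) := fun j => calc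
    (j : ℝ) ^ (s - 1) * exp (-(j * t))
        = (2 / t) ^ (s - 1) * (j * (t / 2)) ^ (s - 1) * exp (-(j * t)) := by
          rw [← mul_rpow (by positivity) (by positivity)]
          field_simp
    _ ≤ (2 / t) ^ (s - 1) * (s ^ (s - 1) * exp (j * (t / 2))) * exp (-(j * t)) := by
          gcongr
          simpa using rpow_le_mul_exp (by linarith : 0 ≤ s - 1) (by positivity : 0 ≤ j * (t / 2))
    _ = s ^ (s - 1) * (2 / t) ^ (s - 1) * exp (-(j * (t / 2))) := by
          have h : exp (j * (t / 2)) * exp (-(j * t)) = exp (-(j * (t / 2))) := by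
            rw [← exp_add]; ring_nf
          linear_combination (2 / t) ^ (s - 1) * s ^ (s - 1) * h
  calc ∑ j ∈ Icc 1 n, (j : ℝ) ^ (s - 1) * exp (-(j * t))
      ≤ ∑ j ∈ Icc 1 n, s ^ (s - 1) * (2 / t) ^ (s - 1) * exp (-(j * (t / 2))) :=
        sum_le_sum fun j _ => hterm j
    _ ≤ s ^ (s - 1) * (2 / t) ^ (s - 1) * (1 / (t / 2)) := by
        rw [← mul_sum]; gcongr; exact sum_exp_neg_mul_le (by positivity) n
    _ = s ^ (s - 1) * 2 ^ s * t ^ (-s) := by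
        rw [one_div_div, mul_assoc, ← rpow_add_one (by positivity), sub_add_cancel,
          div_rpow zero_le_two ht.le, rpow_neg ht.le, div_eq_mul_inv, mul_assoc]

lemma div_le_sum_Icc_rpow {s : ℝ} (hs : 1 ≤ s) (N : ℕ) :
    (N : ℝ) ^ s / s ≤ ∑ j ∈ Icc 1 N, (j : ℝ) ^ (s - 1) := by
  have hmono : MonotoneOn (fun x : ℝ => x ^ (s - 1)) (Set.Icc 0 (0 + N)) :=
    fun x hx z _ hxz => rpow_le_rpow hx.1 hxz (by linarith)
  have := hmono.integral_le_sum
  rw [integral_rpow (Or.inl (by linarith)), sub_add_cancel, zero_add,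
    zero_rpow (by positivity), sub_zero] at this
  refine this.trans (le_of_eq ?_)
  rw [show Icc 1 N = Ico 1 (N + 1) from rfl, sum_Ico_eq_sum_range, Nat.add_sub_cancel]
  refine sum_congr rfl fun i _ => ?_
  push_cast; ring_nf

lemma le_sum_rpow_mul_exp_neg {s t : ℝ} (hs : 1 ≤ s) (ht : 0 < t) (ht1 : t ≤ 1) {n : ℕ}
    (hn : 1 ≤ n * t) :
    (2 ^ s * s * exp 1)⁻¹ * t ^ (-s) ≤ ∑ j ∈ Icc 1 n, (j : ℝ) ^ (s - 1) * exp (-(j * t)) := by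
  set N := ⌊t⁻¹⌋₊
  have hN : (N : ℝ) ≤ t⁻¹ := Nat.floor_le (by positivity)
  have hNn : N ≤ n := by
    have : t⁻¹ ≤ n := by rwa [inv_le_iff_one_le_mul₀ ht]
    exact_mod_cast hN.trans this
  have hN2 : (2 * t)⁻¹ ≤ N := by
    have h1 : (1 : ℝ) ≤ t⁻¹ := one_le_inv_iff₀.2 ⟨ht, ht1⟩
    have h2 : (1 : ℝ) ≤ N := by exact_mod_cast Nat.one_le_floor_iff _ |>.2 h1
    have h3 := Nat.lt_floor_add_one t⁻¹
    rw [mul_inv]; linarith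
  calc (2 ^ s * s * exp 1)⁻¹ * t ^ (-s) = exp (-1) * ((2 * t)⁻¹ ^ s / s) := by
        rw [inv_rpow (by positivity), mul_rpow zero_le_two ht.le, rpow_neg ht.le, exp_neg]
        field_simp
    _ ≤ exp (-1) * ((N : ℝ) ^ s / s) := by gcongr
    _ ≤ exp (-1) * ∑ j ∈ Icc 1 N, (j : ℝ) ^ (s - 1) := by
        gcongr; exact div_le_sum_Icc_rpow hs N
    _ ≤ ∑ j ∈ Icc 1 N, (j : ℝ) ^ (s - 1) * exp (-(j * t)) := by
        rw [mul_sum]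
        refine sum_le_sum fun j hj => ?_
        rw [mul_comm]
        gcongr
        have : (j : ℝ) ≤ N := by exact_mod_cast (mem_Icc.1 hj).2
        have : (j : ℝ) * t ≤ 1 := by
          calc (j : ℝ) * t ≤ t⁻¹ * t := by gcongr; linarith
            _ = 1 := inv_mul_cancel₀ ht.ne'
        linarith
    _ ≤ ∑ j ∈ Icc 1 n, (j : ℝ) ^ (s - 1) * exp (-(j * t)) :=
        sum_le_sum_of_subset_of_nonneg (Icc_subset_Icc_right hNn) fun _ _ _ => by positivity

lemma summable_succ_pow_mul_exp_neg (m : ℕ) {x σ : ℝ} (hx : 0 < x) (hσ : 0 < σ) :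
    Summable fun k : ℕ => ((k : ℝ) + 1) ^ m * exp (-(x * (k + 1) * σ)) := by
  have hq : ‖exp (-(x * σ))‖ < 1 := by
    rw [norm_of_nonneg (exp_pos _).le, exp_lt_one_iff, neg_lt_zero]; positivity
  have := (summable_nat_add_iff (f := fun k : ℕ => (k : ℝ) ^ m * exp (-(x * σ)) ^ k) 1).2
    (summable_pow_mul_geometric_of_norm_lt_one m hq)
  refine this.congr fun k => ?_
  rw [← exp_nat_mul]; push_cast; ring_nf

lemma summable_succ_rpow {p : ℝ} (hp : p < -1) : Summable fun k : ℕ => ((k : ℝ) + 1) ^ p := by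
  simpa using (summable_nat_add_iff 1).2 (summable_nat_rpow.2 hp)

lemma sum_rpow_mul_tsum_le {s : ℝ} {m : ℕ} (hm : m + 1 < s) :
    ∃ C, 0 < C ∧ ∀ t, 0 < t → ∀ n : ℕ, ∑ j ∈ Icc 1 n, (j : ℝ) ^ (s - 1) *
      ∑' k : ℕ, ((k : ℝ) + 1) ^ m * exp (-(j * (k + 1) * t)) ≤ C * t ^ (-s) := by
  have hs : 1 ≤ s := by linarith [(m.cast_nonneg : (0 : ℝ) ≤ m)]
  have hZ := summable_succ_rpow (by linarith : (m : ℝ) - s < -1)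
  refine ⟨s ^ (s - 1) * 2 ^ s * ∑' k : ℕ, ((k : ℝ) + 1) ^ ((m : ℝ) - s),
    mul_pos (by positivity) (hZ.tsum_pos (fun _ => by positivity) 0 (by positivity)),
    fun t ht n => ?_⟩
  have hsum : ∀ j ∈ Icc 1 n, Summable fun k : ℕ =>
      (j : ℝ) ^ (s - 1) * (((k : ℝ) + 1) ^ m * exp (-(j * (k + 1) * t))) := fun j hj =>
    (summable_succ_pow_mul_exp_neg m (by exact_mod_cast (mem_Icc.1 hj).1) ht).mul_left _
  have hterm : ∀ k : ℕ, ∑ j ∈ Icc 1 n,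
      (j : ℝ) ^ (s - 1) * (((k : ℝ) + 1) ^ m * exp (-(j * (k + 1) * t))) ≤
      s ^ (s - 1) * 2 ^ s * t ^ (-s) * ((k : ℝ) + 1) ^ ((m : ℝ) - s) := fun k => calc
    _ = ((k : ℝ) + 1) ^ m * ∑ j ∈ Icc 1 n, (j : ℝ) ^ (s - 1) * exp (-(j * ((k + 1) * t))) := by
        rw [mul_sum]; exact sum_congr rfl fun j _ => by ring_nf
    _ ≤ ((k : ℝ) + 1) ^ m * (s ^ (s - 1) * 2 ^ s * ((k + 1) * t) ^ (-s)) := by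
        gcongr; exact sum_rpow_mul_exp_neg_le hs (by positivity) n
    _ = s ^ (s - 1) * 2 ^ s * t ^ (-s) * ((k : ℝ) + 1) ^ ((m : ℝ) - s) := by
        rw [mul_rpow (by positivity) ht.le, rpow_sub (by positivity : (0 : ℝ) < k + 1),
          rpow_natCast, div_eq_mul_inv, ← rpow_neg (by positivity)]
        ring
  calc ∑ j ∈ Icc 1 n, (j : ℝ) ^ (s - 1) * ∑' k : ℕ, ((k : ℝ) + 1) ^ m * exp (-(j * (k + 1) * t))
      = ∑' k : ℕ, ∑ j ∈ Icc 1 n,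
          (j : ℝ) ^ (s - 1) * (((k : ℝ) + 1) ^ m * exp (-(j * (k + 1) * t))) := by
        rw [Summable.tsum_finsetSum hsum]; exact sum_congr rfl fun j _ => tsum_mul_left.symm
    _ ≤ ∑' k : ℕ, s ^ (s - 1) * 2 ^ s * t ^ (-s) * ((k : ℝ) + 1) ^ ((m : ℝ) - s) :=
        Summable.tsum_le_tsum hterm (summable_sum hsum) (hZ.mul_left _)
    _ = _ := by rw [tsum_mul_left]; ring

lemma mul_rpow_neg_inv_rpow_neg {c x p : ℝ} (hc : 0 ≤ c) (hx : 0 ≤ x) (hp : p ≠ 0) (q : ℝ) :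
    (c * x ^ (-p⁻¹)) ^ (-q) = c ^ (-q) * x ^ (q / p) := by
  rw [mul_rpow hc (rpow_nonneg hx _), ← rpow_mul hx]
  congr 2
  field_simp

lemma rpow_inv_mul_rpow_neg_inv_rpow_neg {K x p : ℝ} (hK : 0 ≤ K) (hx : 0 ≤ x) (hp : p ≠ 0) :
    (K ^ p⁻¹ * x ^ (-p⁻¹)) ^ (-p) = K⁻¹ * x := by
  rw [mul_rpow_neg_inv_rpow_neg (rpow_nonneg hK _) hx hp, rpow_neg (rpow_nonneg hK _),
    rpow_inv_rpow hK hp, div_self hp, rpow_one]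

lemma rpow_neg_mem_Icc_of_mem_Icc {δ c₁ c₂ x p q : ℝ} (hc₁ : 0 ≤ c₁) (hc₂ : 0 ≤ c₂) (hx : 0 ≤ x)
    (hν : 0 < c₁ * x ^ (-p⁻¹)) (hδ : δ ∈ Set.Icc (c₁ * x ^ (-p⁻¹)) (c₂ * x ^ (-p⁻¹)))
    (hp : p ≠ 0) (hq : 0 ≤ q) :
    δ ^ (-q) ∈ Set.Icc (c₂ ^ (-q) * x ^ (q / p)) (c₁ ^ (-q) * x ^ (q / p)) := by
  rw [← mul_rpow_neg_inv_rpow_neg hc₁ hx hp, ← mul_rpow_neg_inv_rpow_neg hc₂ hx hp]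
  exact ⟨rpow_le_rpow_of_nonpos (hν.trans_le hδ.1) hδ.2 (neg_nonpos.2 hq),
    rpow_le_rpow_of_nonpos hν hδ.1 (neg_nonpos.2 hq)⟩

lemma eventually_mul_rpow_neg_le_one (c : ℝ) {q : ℝ} (hq : 0 < q) :
    ∀ᶠ n : ℕ in atTop, c * (n : ℝ) ^ (-q) ≤ 1 := by
  have h := ((tendsto_rpow_neg_atTop hq).comp tendsto_natCast_atTop_atTop).const_mul c
  rw [mul_zero] at h
  exact h.eventually_le_const one_pos

lemma eventually_one_le_mul_mul_rpow_neg {c : ℝ} (hc : 0 < c) {q : ℝ} (hq : q < 1) :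
    ∀ᶠ n : ℕ in atTop, 1 ≤ n * (c * (n : ℝ) ^ (-q)) := by
  have h := ((tendsto_rpow_atTop (sub_pos.2 hq)).comp
    tendsto_natCast_atTop_atTop).const_mul_atTop hc
  filter_upwards [h.eventually_ge_atTop 1, eventually_gt_atTop 0] with n hn hn0
  rwa [Function.comp_apply, sub_eq_add_neg, rpow_add (by exact_mod_cast hn0), rpow_one,
    mul_left_comm] at hn

lemma pow_mul_exp_neg_mul_log_add {y : ℝ} (hy : 0 < y) (j : ℕ) (δ : ℝ) :
    y ^ j * exp (-(j * (log y + δ))) = exp (-(j * δ)) := by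
  rw [← exp_log (pow_pos hy j), log_pow, ← exp_add]; ring_nf

lemma pow_mul_exp_neg_le {y : ℝ} (hy : 1 ≤ y) (j k : ℕ) (δ : ℝ) :
    y ^ j * exp (-(j * (k + 1) * (log y + δ))) ≤ exp (-(j * (k + 1) * δ)) := by
  rw [← exp_log (pow_pos (by linarith) j), log_pow, ← exp_add]
  gcongr
  have : 0 ≤ (j : ℝ) * k * log y := by have := log_nonneg hy; positivity
  linarith

lemma rho_antitoneOn (a : ℕ → ℕ) (l n : ℕ) : AntitoneOn (rho a l n) (Set.Ioi 0) := by
  intro σ₁ hσ₁ σ₂ hσ₂ hσ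
  refine sum_le_sum fun j hj => ?_
  have hj' : (0 : ℝ) < j := by exact_mod_cast (mem_Icc.1 hj).1
  refine mul_le_mul_of_nonneg_left ?_ (by positivity)
  exact Summable.tsum_le_tsum (fun k => by gcongr)
    (summable_succ_pow_mul_exp_neg _ hj' hσ₂) (summable_succ_pow_mul_exp_neg _ hj' hσ₁)

lemma Mfun_eq_rho_one (a : ℕ → ℕ) (n : ℕ) {σ : ℝ} (hσ : 0 < σ) : Mfun a n σ = rho a 1 n σ := by
  refine sum_congr rfl fun j hj => ?_
  have hj' : (0 : ℝ) < j := by exact_mod_cast (mem_Icc.1 hj).1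
  have hq : exp (-(j * σ)) < 1 := exp_lt_one_iff.2 (neg_lt_zero.2 (by positivity))
  have hgeom : ∑' k : ℕ, ((k : ℝ) + 1) ^ (1 - 1) * exp (-(j * (k + 1) * σ)) =
      exp (-(j * σ)) / (1 - exp (-(j * σ))) := by
    rw [div_eq_mul_inv, ← tsum_geometric_of_lt_one (exp_pos _).le hq, ← tsum_mul_left]
    refine tsum_congr fun k => ?_
    rw [← exp_nat_mul, ← exp_add]; ring_nf
  rw [hgeom, pow_one, mul_div_assoc]

section

variable {a : ℕ → ℕ} {r y : ℝ}

lemma rho_log_add_le {D : ℝ} (hD : 0 ≤ D) (hy : 1 ≤ y)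
    (ha : ∀ j : ℕ, 1 ≤ j → (a j : ℝ) ≤ D * (j : ℝ) ^ (r - 1) * y ^ j) (l : ℕ) {δ : ℝ} (hδ : 0 < δ)
    (n : ℕ) :
    rho a l n (log y + δ) ≤ D * ∑ j ∈ Icc 1 n, (j : ℝ) ^ (r + l - 1) *
      ∑' k : ℕ, ((k : ℝ) + 1) ^ (l - 1) * exp (-(j * (k + 1) * δ)) := by
  have hσ : 0 < log y + δ := by linarith [log_nonneg hy]
  rw [rho, mul_sum]
  refine sum_le_sum fun j hj => ?_
  have hj : 1 ≤ j := (mem_Icc.1 hj).1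
  have hj' : (0 : ℝ) < j := by exact_mod_cast hj
  calc (j : ℝ) ^ l * a j * ∑' k : ℕ, ((k : ℝ) + 1) ^ (l - 1) * exp (-(j * (k + 1) * (log y + δ)))
      ≤ (j : ℝ) ^ l * (D * (j : ℝ) ^ (r - 1) * y ^ j) *
          ∑' k : ℕ, ((k : ℝ) + 1) ^ (l - 1) * exp (-(j * (k + 1) * (log y + δ))) := by
        refine mul_le_mul_of_nonneg_right ?_ (tsum_nonneg fun _ => by positivity)
        exact mul_le_mul_of_nonneg_left (ha j hj) (by positivity)
    _ = D * (j : ℝ) ^ (r + l - 1) *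
          ∑' k : ℕ, ((k : ℝ) + 1) ^ (l - 1) * (y ^ j * exp (-(j * (k + 1) * (log y + δ)))) := by
        rw [← tsum_mul_left, ← tsum_mul_left]
        refine tsum_congr fun k => ?_
        rw [show r + l - 1 = l + (r - 1) by ring, rpow_add hj', rpow_natCast]
        ring
    _ ≤ D * ((j : ℝ) ^ (r + l - 1) *
          ∑' k : ℕ, ((k : ℝ) + 1) ^ (l - 1) * exp (-(j * (k + 1) * δ))) := by
        rw [← mul_assoc]
        refine mul_le_mul_of_nonneg_left ?_ (by positivity)
        refine Summable.tsum_le_tsum (fun k => ?_) ?_ (summable_succ_pow_mul_exp_neg _ hj' hδ)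
        · gcongr; exact pow_mul_exp_neg_le hy j k δ
        · exact ((summable_succ_pow_mul_exp_neg (l - 1) hj' hσ).mul_left (y ^ j)).congr
            fun k => by ring

lemma le_rho_log_add {D : ℝ} (hy : 1 ≤ y)
    (ha : ∀ j : ℕ, 1 ≤ j → D * (j : ℝ) ^ (r - 1) * y ^ j ≤ a j) (l : ℕ) {δ : ℝ} (hδ : 0 < δ)
    (n : ℕ) :
    D * ∑ j ∈ Icc 1 n, (j : ℝ) ^ (r + l - 1) * exp (-(j * δ)) ≤ rho a l n (log y + δ) := by
  have hσ : 0 < log y + δ := by linarith [log_nonneg hy]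
  rw [rho, mul_sum]
  refine sum_le_sum fun j hj => ?_
  have hj : 1 ≤ j := (mem_Icc.1 hj).1
  have hj' : (0 : ℝ) < j := by exact_mod_cast hj
  have hfirst : exp (-(j * (log y + δ))) ≤
      ∑' k : ℕ, ((k : ℝ) + 1) ^ (l - 1) * exp (-(j * (k + 1) * (log y + δ))) := by
    simpa using (summable_succ_pow_mul_exp_neg (l - 1) hj' hσ).le_tsum 0
      fun k _ => by positivity
  calc D * ((j : ℝ) ^ (r + l - 1) * exp (-(j * δ)))
      = (j : ℝ) ^ l * (D * (j : ℝ) ^ (r - 1) * y ^ j) * exp (-(j * (log y + δ))) := by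
        rw [← pow_mul_exp_neg_mul_log_add (by linarith : (0 : ℝ) < y) j δ,
          show r + l - 1 = l + (r - 1) by ring, rpow_add hj', rpow_natCast]
        ring
    _ ≤ (j : ℝ) ^ l * a j *
          ∑' k : ℕ, ((k : ℝ) + 1) ^ (l - 1) * exp (-(j * (k + 1) * (log y + δ))) := by
        gcongr
        exact ha j hj

lemma ExpansiveCond.rho_log_add_le_rpow (hexp : ExpansiveCond a r y) (hr : 0 < r) (hy : 1 ≤ y)
    {l : ℕ} (hl : 1 ≤ l) :
    ∃ C, 0 < C ∧ ∀ δ : ℝ, 0 < δ → ∀ n, rho a l n (log y + δ) ≤ C * δ ^ (-(r + l)) := by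
  obtain ⟨_, D, -, hD, ha⟩ := hexp
  have hm : ((l - 1 : ℕ) : ℝ) + 1 < r + l := by
    rw [Nat.cast_sub hl, Nat.cast_one]; linarith
  obtain ⟨C, hC, hsum⟩ := sum_rpow_mul_tsum_le hm
  refine ⟨D * C, by positivity, fun δ hδ n => ?_⟩
  calc rho a l n (log y + δ) ≤ D * ∑ j ∈ Icc 1 n, (j : ℝ) ^ (r + l - 1) *
        ∑' k : ℕ, ((k : ℝ) + 1) ^ (l - 1) * exp (-(j * (k + 1) * δ)) :=
        rho_log_add_le hD.le hy (fun j hj => (ha j hj).2) l hδ n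
    _ ≤ D * C * δ ^ (-(r + l)) := by
        rw [mul_assoc]; exact mul_le_mul_of_nonneg_left (hsum δ hδ n) hD.le

lemma ExpansiveCond.rpow_le_rho_log_add (hexp : ExpansiveCond a r y) (hr : 0 < r) (hy : 1 ≤ y)
    {l : ℕ} (hl : 1 ≤ l) :
    ∃ c, 0 < c ∧ ∀ δ : ℝ, 0 < δ → δ ≤ 1 → ∀ n : ℕ, 1 ≤ n * δ →
      c * δ ^ (-(r + l)) ≤ rho a l n (log y + δ) := by
  obtain ⟨D, _, hD, -, ha⟩ := hexp
  have hs : 1 ≤ r + l := by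
    have : (1 : ℝ) ≤ l := by exact_mod_cast hl
    linarith
  refine ⟨D * (2 ^ (r + l) * (r + l) * exp 1)⁻¹, by positivity, fun δ hδ hδ1 n hn => ?_⟩
  calc D * (2 ^ (r + l) * (r + l) * exp 1)⁻¹ * δ ^ (-(r + l))
      ≤ D * ∑ j ∈ Icc 1 n, (j : ℝ) ^ (r + l - 1) * exp (-(j * δ)) := by
        rw [mul_assoc]
        exact mul_le_mul_of_nonneg_left (le_sum_rpow_mul_exp_neg hs hδ hδ1 hn) hD.le
    _ ≤ rho a l n (log y + δ) := le_rho_log_add hy (fun j hj => (ha j hj).1) l hδ n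

lemma ExpansiveCond.eventually_sub_log_le (hexp : ExpansiveCond a r y) (hr : 0 < r) (hy : 1 ≤ y)
    {σ : ℕ → ℝ} (hσ : ∀ n : ℕ, 1 ≤ n → 0 < σ n ∧ Mfun a n (σ n) = n) :
    ∃ c, 0 < c ∧ ∀ᶠ n : ℕ in atTop, σ n - log y ≤ c * (n : ℝ) ^ (-(r + 1)⁻¹) := by
  obtain ⟨C, hC, hup⟩ := hexp.rho_log_add_le_rpow (l := 1) hr hy le_rfl
  rw [Nat.cast_one] at hup
  refine ⟨(2 * C) ^ (r + 1)⁻¹, by positivity, ?_⟩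
  filter_upwards [eventually_ge_atTop 1] with n hn
  obtain ⟨hσpos, hM⟩ := hσ n hn
  rw [Mfun_eq_rho_one a n hσpos] at hM
  have hn0 : (0 : ℝ) < n := by exact_mod_cast hn
  set t := (2 * C) ^ (r + 1)⁻¹ * (n : ℝ) ^ (-(r + 1)⁻¹)
  have hlt : rho a 1 n (log y + t) < rho a 1 n (σ n) := calc
    rho a 1 n (log y + t) ≤ C * t ^ (-(r + 1)) := hup t (by positivity) n
    _ < n := by
      rw [rpow_inv_mul_rpow_neg_inv_rpow_neg (by positivity) hn0.le (by positivity)]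
      field_simp; linarith
    _ = rho a 1 n (σ n) := hM.symm
  have hlog := log_nonneg hy
  have := (rho_antitoneOn a 1 n).reflect_lt (Set.mem_Ioi.2 (by positivity))
    (Set.mem_Ioi.2 hσpos) hlt
  linarith

lemma ExpansiveCond.eventually_le_sub_log (hexp : ExpansiveCond a r y) (hr : 0 < r) (hy : 1 ≤ y)
    {σ : ℕ → ℝ} (hσ : ∀ n : ℕ, 1 ≤ n → 0 < σ n ∧ Mfun a n (σ n) = n) :
    ∃ c, 0 < c ∧ ∀ᶠ n : ℕ in atTop, c * (n : ℝ) ^ (-(r + 1)⁻¹) ≤ σ n - log y := by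
  obtain ⟨c, hc, hlow⟩ := hexp.rpow_le_rho_log_add (l := 1) hr hy le_rfl
  rw [Nat.cast_one] at hlow
  refine ⟨(c / 2) ^ (r + 1)⁻¹, by positivity, ?_⟩
  filter_upwards [eventually_ge_atTop 1,
    eventually_mul_rpow_neg_le_one ((c / 2) ^ (r + 1)⁻¹) (by positivity : 0 < (r + 1)⁻¹),
    eventually_one_le_mul_mul_rpow_neg (by positivity : 0 < (c / 2) ^ (r + 1)⁻¹)
      (inv_lt_one_of_one_lt₀ (by linarith : 1 < r + 1))] with n hn hsmall hlarge
  obtain ⟨hσpos, hM⟩ := hσ n hn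
  rw [Mfun_eq_rho_one a n hσpos] at hM
  have hn0 : (0 : ℝ) < n := by exact_mod_cast hn
  set t := (c / 2) ^ (r + 1)⁻¹ * (n : ℝ) ^ (-(r + 1)⁻¹)
  have hlt : rho a 1 n (σ n) < rho a 1 n (log y + t) := calc
    rho a 1 n (σ n) = n := hM
    _ < c * t ^ (-(r + 1)) := by
      rw [rpow_inv_mul_rpow_neg_inv_rpow_neg (by positivity) hn0.le (by positivity)]
      field_simp; linarith
    _ ≤ rho a 1 n (log y + t) := hlow t (by positivity) hsmall n hlarge
  have hlog := log_nonneg hy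
  have := (rho_antitoneOn a 1 n).reflect_lt (Set.mem_Ioi.2 hσpos)
    (Set.mem_Ioi.2 (by positivity)) hlt
  linarith

end

/-- under condition (exp), for every fixed integer `l ≥ 3`,
`ρ_l(n) ≍ n^{(r+l)/(r+1)}`. -/
theorem rho_asymptotics (a : ℕ → ℕ) (r y : ℝ) (hr : 0 < r) (hy : 1 ≤ y)
    (hexp : ExpansiveCond a r y)
    (σ : ℕ → ℝ) (hσ : ∀ n : ℕ, 1 ≤ n → 0 < σ n ∧ Mfun a n (σ n) = n)
    (l : ℕ) (hl : 3 ≤ l) :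
    ∃ C₁ C₂ : ℝ, 0 < C₁ ∧ 0 < C₂ ∧ ∃ N : ℕ, ∀ n ≥ N,
      C₁ * (n : ℝ) ^ ((r + l) / (r + 1)) ≤ rho a l n (σ n) ∧
      rho a l n (σ n) ≤ C₂ * (n : ℝ) ^ ((r + l) / (r + 1)) := by
  obtain ⟨c₁, hc₁, hσ₁⟩ := hexp.eventually_le_sub_log hr hy hσ
  obtain ⟨c₂, hc₂, hσ₂⟩ := hexp.eventually_sub_log_le hr hy hσ
  obtain ⟨C, hC, hup⟩ := hexp.rho_log_add_le_rpow hr hy (by omega : 1 ≤ l)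
  obtain ⟨c, hc, hlow⟩ := hexp.rpow_le_rho_log_add hr hy (by omega : 1 ≤ l)
  obtain ⟨N, hN⟩ := eventually_atTop.1 <| hσ₁.and <| hσ₂.and <|
    (eventually_mul_rpow_neg_le_one c₂ (by positivity : 0 < (r + 1)⁻¹)).and
    (eventually_one_le_mul_mul_rpow_neg hc₁ (inv_lt_one_of_one_lt₀ (by linarith : 1 < r + 1)))
  refine ⟨c * c₂ ^ (-(r + l)), C * c₁ ^ (-(r + l)), by positivity, by positivity, N,
    fun n hn => ?_⟩
  obtain ⟨hlo, hhi, hsmall, hlarge⟩ := hN n hn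
  have hν : 0 < c₁ * (n : ℝ) ^ (-(r + 1)⁻¹) :=
    pos_of_mul_pos_right (one_pos.trans_le hlarge) n.cast_nonneg
  have hδ : 0 < σ n - log y := hν.trans_le hlo
  obtain ⟨hpow_lo, hpow_hi⟩ := rpow_neg_mem_Icc_of_mem_Icc hc₁.le hc₂.le n.cast_nonneg hν
    ⟨hlo, hhi⟩ (by positivity) (show (0 : ℝ) ≤ r + l by positivity)
  rw [show σ n = log y + (σ n - log y) by ring]
  constructor
  · calc c * c₂ ^ (-(r + l)) * (n : ℝ) ^ ((r + l) / (r + 1))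
        ≤ c * (σ n - log y) ^ (-(r + l)) := by
          rw [mul_assoc]; exact mul_le_mul_of_nonneg_left hpow_lo hc.le
      _ ≤ rho a l n (log y + (σ n - log y)) :=
          hlow _ hδ (hhi.trans hsmall) n (hlarge.trans (by gcongr))
  · calc rho a l n (log y + (σ n - log y)) ≤ C * (σ n - log y) ^ (-(r + l)) := hup _ hδ n
      _ ≤ C * c₁ ^ (-(r + l)) * (n : ℝ) ^ ((r + l) / (r + 1)) := by
          rw [mul_assoc]; exact mul_le_mul_of_nonneg_left hpow_hi hC.le
end
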